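/- Let (R,𝔪) be a Noetherian local ring of prime characteristic p, with 𝔪-adic completion R̂. If an ideal 𝔞 of R and a power Q of p satisfy ((𝔞R̂)^F)^[Q] = (𝔞R̂)^[Q] in R̂, then (𝔞^F)^[Q] = 𝔞^[Q] in R. -/

import Mathlib

/-!
Frobenius powers commute with extension of ideals, and by the freshman's dream the Frobenius power
of an ideal is that of any generating set; hence `(𝔞^F)^[Q]` maps into `((𝔞R̂)^F)^[Q] = (𝔞R̂)^[Q]`,
the extension of `𝔞^[Q]`. Since `R̂` is flat and local over `R`, it is faithfully flat, so extended
ideals contract back to themselves and `(𝔞^F)^[Q] ⊆ 𝔞^[Q]`.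
-/

/-- The `q`-th Frobenius power of a set `S`: the ideal generated by `q`-th powers
of elements of `S`. -/
def frobPow {R : Type*} [CommRing R] (S : Set R) (q : ℕ) : Ideal R :=
  Ideal.span ((· ^ q) '' S)

/-- The Frobenius closure of an ideal `I` in a ring of characteristic `p`. -/
def frobClosure {R : Type*} [CommRing R] (p : ℕ) (I : Ideal R) : Set R :=
  {r | ∃ n : ℕ, r ^ p ^ n ∈ frobPow (I : Set R) (p ^ n)}

section FrobeniusPower

variable {R S : Type*} [CommRing R] [CommRing S]

lemma frobPow_mono {s t : Set R} (hst : s ⊆ t) (q : ℕ) : frobPow s q ≤ frobPow t q :=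
  Ideal.span_mono (Set.image_mono hst)

lemma map_frobPow (f : R →+* S) (s : Set R) (q : ℕ) :
    (frobPow s q).map f = frobPow (f '' s) q := by
  simp only [frobPow, Ideal.map_span, Set.image_image, map_pow]

lemma pow_mem_frobPow_of_mem_span (p : ℕ) [ExpChar R p] (e : ℕ) {s : Set R} {a : R}
    (ha : a ∈ Ideal.span s) : a ^ p ^ e ∈ frobPow s (p ^ e) := by
  induction ha using Submodule.span_induction with
  | mem x hx => exact Ideal.subset_span ⟨x, hx, rfl⟩
  | zero => simp [zero_pow (expChar_pow_pos R p e).ne']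
  | add x y _ _ hx hy => simpa only [add_pow_expChar_pow] using add_mem hx hy
  | smul r x _ hx => simpa only [smul_eq_mul, mul_pow] using Ideal.mul_mem_left _ _ hx

lemma frobPow_span (p : ℕ) [ExpChar R p] (e : ℕ) (s : Set R) :
    frobPow (Ideal.span s : Set R) (p ^ e) = frobPow s (p ^ e) := by
  refine le_antisymm ?_ (frobPow_mono Ideal.subset_span _)
  rw [frobPow, Ideal.span_le]
  rintro _ ⟨a, ha, rfl⟩
  exact pow_mem_frobPow_of_mem_span p e ha

lemma frobPow_map (p : ℕ) [ExpChar S p] (e : ℕ) (f : R →+* S) (I : Ideal R) :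
    frobPow (I.map f : Set S) (p ^ e) = (frobPow (I : Set R) (p ^ e)).map f := by
  rw [map_frobPow, Ideal.map, frobPow_span]

lemma subset_frobClosure (p : ℕ) (I : Ideal R) : (I : Set R) ⊆ frobClosure p I :=
  fun r hr ↦ ⟨0, Ideal.subset_span ⟨r, hr, rfl⟩⟩

lemma image_frobClosure_subset (p : ℕ) (f : R →+* S) (I : Ideal R) :
    f '' frobClosure p I ⊆ frobClosure p (I.map f) := by
  rintro _ ⟨r, ⟨n, hn⟩, rfl⟩
  refine ⟨n, ?_⟩
  have hmap := Ideal.mem_map_of_mem f hn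
  rw [map_frobPow] at hmap
  rw [← map_pow]
  exact frobPow_mono Ideal.subset_span _ hmap

end FrobeniusPower

theorem frobPow_frobClosure_eq_of_faithfullyFlat {A B : Type*} [CommRing A] [CommRing B]
    [Algebra A B] [Module.FaithfullyFlat A B] (p : ℕ) [ExpChar B p] (I : Ideal A) (e : ℕ)
    (h : frobPow (frobClosure p (I.map (algebraMap A B))) (p ^ e) =
      frobPow (I.map (algebraMap A B) : Set B) (p ^ e)) :
    frobPow (frobClosure p I) (p ^ e) = frobPow (I : Set A) (p ^ e) := by
  set f := algebraMap A B
  have hext : (frobPow (frobClosure p I) (p ^ e)).map f ≤ (frobPow (I : Set A) (p ^ e)).map f := by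
    rw [map_frobPow, ← frobPow_map, ← h]
    exact frobPow_mono (image_frobClosure_subset p f I) _
  refine le_antisymm ?_ (frobPow_mono (subset_frobClosure p I) _)
  calc frobPow (frobClosure p I) (p ^ e)
      ≤ ((frobPow (frobClosure p I) (p ^ e)).map f).comap f := Ideal.le_comap_map
    _ ≤ ((frobPow (I : Set A) (p ^ e)).map f).comap f := Ideal.comap_mono hext
    _ = frobPow (I : Set A) (p ^ e) := Ideal.comap_map_eq_self_of_faithfullyFlat _

/-- if `((𝔞R̂)^F)^{[Q]} = (𝔞R̂)^{[Q]}` in the `𝔪`-adic completion `R̂`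
of a Noetherian local ring `R` of characteristic `p`, then `(𝔞^F)^{[Q]} = 𝔞^{[Q]}` in `R`. -/
theorem frobClosure_of_completion {R : Type*} [CommRing R] [IsNoetherianRing R]
    [IsLocalRing R] (p : ℕ) (hp : p.Prime) [CharP R p] (𝔞 : Ideal R) (e : ℕ)
    (h : frobPow (frobClosure p (𝔞.map (algebraMap R
          (AdicCompletion (IsLocalRing.maximalIdeal R) R)))) (p ^ e) =
        frobPow ((𝔞.map (algebraMap R
          (AdicCompletion (IsLocalRing.maximalIdeal R) R)) :
            Ideal (AdicCompletion (IsLocalRing.maximalIdeal R) R)) : Set _) (p ^ e)) :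
    frobPow (frobClosure p 𝔞) (p ^ e) = frobPow (𝔞 : Set R) (p ^ e) := by
  let Rhat := AdicCompletion (IsLocalRing.maximalIdeal R) R
  have : Module.FaithfullyFlat R Rhat := .of_flat_of_isLocalHom
  have : CharP Rhat p := charP_of_injective_algebraMap (FaithfulSMul.algebraMap_injective R Rhat) p
  have : ExpChar Rhat p := .prime hp
  exact frobPow_frobClosure_eq_of_faithfullyFlat p 𝔞 e h
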